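/- Let $G(r,t) = (4\pi t)^{-3/2} e^{-t} \frac{r}{\sinh r} e^{-r^2/(4t)}$. Then $\int_0^\infty 4\pi (\sinh r)^2\, \big| G(r,t+1) - G(r,t) \big|\, dr \to 0$ as $t \to \infty$; i.e., the fundamental solution of the heat equation on $\mathbb{H}^3$ and its time-delayed version $G(r,t+1)$ converge to each other in $L^1(\mathbb{H}^3)$ as $t \to \infty$. -/

import Mathlib

open Real Filter MeasureTheory

/-- The fundamental solution of the heat equation on `ℍ³` in geodesic polar
coordinates: `G(r,t) = (4πt)^(-3/2) e^{-t} (r / sinh r) e^{-r²/(4t)}`. -/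
noncomputable def hypHeatKernel (r t : ℝ) : ℝ :=
  (4 * π * t) ^ (-(3 : ℝ) / 2) * Real.exp (-t) * (r / Real.sinh r) *
    Real.exp (-r ^ 2 / (4 * t))

/-!
The volume-weighted kernel `D(r,s) = 4π sinh²r G(r,s) = r sinh r e^{-s-r²/(4s)} / (2√π s^{3/2})`
is, because `sinh r ≤ e^r / 2`, dominated by `(1 + |u|) e^{-u²/4} / √s` with `u = (r - 2s)/√s`:
the heat travels outward at speed 2 in a window of width `√s`. Moreover
`D(r,t) = q e^z D(r,t+1)` with `q = ((t+1)/t)^{3/2} ≤ 1 + 3/t` and `z = 1 - r²/(4t(t+1))`,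
and in that window `|z| = O((1 + |u|)²/√t)`. Hence `|D(r,t+1) - D(r,t)|` is `O(1/t)` times
Gaussian weights of width `√t`, whose integrals are `O(√t)`, and the `L¹` distance is `O(1/√t)`.
-/

lemma abs_exp_sub_one_le_abs_mul_exp_add_one (y : ℝ) : |exp y - 1| ≤ |y| * (exp y + 1) := by
  rcases le_total 0 y with hy | hy
  · have h := mul_le_mul_of_nonneg_right (add_one_le_exp (-y)) (exp_pos y).le
    rw [add_mul, ← exp_add, neg_add_cancel, exp_zero] at h
    rw [abs_of_nonneg (by linarith [add_one_le_exp y]), abs_of_nonneg hy]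
    nlinarith
  · rw [abs_of_nonpos (by simpa using hy), abs_of_nonpos hy]
    nlinarith [add_one_le_exp y, exp_pos y]

lemma abs_sub_le_of_eq_mul_exp {a b q z : ℝ} (hb : 0 ≤ b) (hq : 1 ≤ q)
    (ha : a = q * exp z * b) : |b - a| ≤ (q - 1) * a + |z| * (a + b) := by
  have hexp : exp z * b ≤ a := by
    rw [ha, mul_assoc]; exact le_mul_of_one_le_left (by positivity) hq
  calc |b - a| = |(q - 1) * (exp z * b) + (exp z - 1) * b| := by
        rw [abs_sub_comm, ha]; congr 1; ring
    _ ≤ (q - 1) * (exp z * b) + |z| * (exp z + 1) * b := by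
        refine (abs_add_le _ _).trans (add_le_add ?_ ?_)
        · exact (abs_of_nonneg (by nlinarith [exp_pos z])).le
        · rw [abs_mul, abs_of_nonneg hb]
          exact mul_le_mul_of_nonneg_right (abs_exp_sub_one_le_abs_mul_exp_add_one z) hb
    _ ≤ (q - 1) * a + |z| * (a + b) := by
        have := mul_le_mul_of_nonneg_left hexp (abs_nonneg z)
        nlinarith [mul_le_mul_of_nonneg_left hexp (sub_nonneg.2 hq)]

lemma MeasureTheory.Integrable.comp_sub_div {E : Type*} [NormedAddCommGroup E] {g : ℝ → E}
    (hg : Integrable g) (a : ℝ) {c : ℝ} (hc : c ≠ 0) : Integrable fun r => g ((r - a) / c) :=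
  (hg.comp_div hc).comp_sub_right a

lemma MeasureTheory.integral_comp_sub_div {E : Type*} [NormedAddCommGroup E] [NormedSpace ℝ E]
    (g : ℝ → E) (a c : ℝ) : ∫ r, g ((r - a) / c) = |c| • ∫ u, g u := by
  rw [integral_sub_right_eq_self (fun r => g (r / c)) a, Measure.integral_comp_div]

lemma integrable_abs_pow_mul_exp_neg_mul_sq (n : ℕ) {b : ℝ} (hb : 0 < b) :
    Integrable fun x : ℝ => |x| ^ n * exp (-b * x ^ 2) := by
  simpa [Real.rpow_natCast, abs_mul, abs_of_pos (exp_pos _)] using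
    (integrable_rpow_mul_exp_neg_mul_sq hb (s := n) (neg_one_lt_zero.trans_le n.cast_nonneg)).norm

lemma integrable_one_add_abs_pow_mul_exp_neg_mul_sq (n : ℕ) {b : ℝ} (hb : 0 < b) :
    Integrable fun x : ℝ => (1 + |x|) ^ n * exp (-b * x ^ 2) := by
  simp_rw [add_comm (1 : ℝ), add_pow, one_pow, mul_one, Finset.sum_mul]
  refine integrable_finsetSum _ fun k _ => ?_
  simpa [mul_right_comm _ (Nat.choose n k : ℝ)] using
    (integrable_abs_pow_mul_exp_neg_mul_sq k hb).mul_const (n.choose k : ℝ)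

noncomputable def gaussianWeight (u : ℝ) : ℝ := (1 + |u|) ^ 3 * exp (-u ^ 2 / 4)

lemma gaussianWeight_nonneg (u : ℝ) : 0 ≤ gaussianWeight u := by
  unfold gaussianWeight; positivity

lemma integrable_gaussianWeight : Integrable gaussianWeight := by
  refine (integrable_one_add_abs_pow_mul_exp_neg_mul_sq 3 (b := 1 / 4) (by norm_num)).congr
    (.of_forall fun u => ?_)
  rw [gaussianWeight]
  ring_nf

noncomputable def hypHeatDensity (r s : ℝ) : ℝ := 4 * π * sinh r ^ 2 * hypHeatKernel r s

lemma hypHeatDensity_eq (r : ℝ) {s : ℝ} (hs : 0 < s) :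
    hypHeatDensity r s = r * sinh r * exp (-s - r ^ 2 / (4 * s)) / (2 * √π * (s * √s)) := by
  have hpow : (4 * π * s) ^ (-(3 : ℝ) / 2) = (4 * π * s * (2 * √π * √s))⁻¹ := by
    rw [show -(3 : ℝ) / 2 = -(1 + 1 / 2) by norm_num, rpow_neg (by positivity),
      rpow_add (by positivity), rpow_one, ← sqrt_eq_rpow, sqrt_mul' _ hs.le,
      sqrt_mul (by norm_num), show √4 = 2 by rw [show (4 : ℝ) = 2 ^ 2 by norm_num,
      sqrt_sq (by norm_num)]]
  have hsinh : sinh r ^ 2 * (r / sinh r) = r * sinh r := by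
    rcases eq_or_ne (sinh r) 0 with h | h
    · simp [h]
    · field_simp
  rw [hypHeatDensity, hypHeatKernel, hpow, sub_eq_add_neg, exp_add, neg_div]
  have : 0 < √π := by positivity
  have : 0 < √s := by positivity
  field_simp

lemma hypHeatDensity_nonneg {r s : ℝ} (hr : 0 ≤ r) (hs : 0 < s) : 0 ≤ hypHeatDensity r s := by
  rw [hypHeatDensity_eq r hs]
  have := sinh_nonneg_iff.2 hr
  positivity

lemma hypHeatDensity_le_gaussian {r s : ℝ} (hr : 0 ≤ r) (hs : 1 ≤ s) :
    hypHeatDensity r s ≤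
      (1 + |(r - 2 * s) / √s|) * exp (-((r - 2 * s) / √s) ^ 2 / 4) / √s := by
  have hs0 : 0 < s := by linarith
  have hv : 0 < √s := sqrt_pos.2 hs0
  set u := (r - 2 * s) / √s with hu
  have hr_eq : r = 2 * s + √s * u := by rw [hu]; field_simp; ring
  have hsinh : sinh r ≤ exp r / 2 := by rw [sinh_eq]; linarith [exp_pos (-r)]
  have hexp : exp r * exp (-s - r ^ 2 / (4 * s)) = exp (-u ^ 2 / 4) := by
    rw [← exp_add, hu, div_pow, sq_sqrt hs0.le]
    congr 1
    field_simp
    ring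
  have hhalf : r / 2 ≤ s * (1 + |u|) := by
    have : √s ≤ s := by rw [sqrt_le_left hs0.le]; nlinarith
    nlinarith [le_abs_self u, abs_nonneg u]
  have hπ : 1 ≤ 2 * √π := by linarith [one_le_sqrt.2 (by linarith [pi_gt_three] : 1 ≤ π)]
  rw [hypHeatDensity_eq r hs0]
  calc r * sinh r * exp (-s - r ^ 2 / (4 * s)) / (2 * √π * (s * √s))
      ≤ r * sinh r * exp (-s - r ^ 2 / (4 * s)) / (s * √s) := by
        have := sinh_nonneg_iff.2 hr
        exact div_le_div_of_nonneg_left (by positivity) (by positivity)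
          (le_mul_of_one_le_left (by positivity) hπ)
    _ ≤ r * (exp r / 2) * exp (-s - r ^ 2 / (4 * s)) / (s * √s) := by gcongr
    _ = r / 2 * exp (-u ^ 2 / 4) / (s * √s) := by rw [← hexp]; ring
    _ ≤ s * (1 + |u|) * exp (-u ^ 2 / 4) / (s * √s) := by gcongr
    _ = (1 + |u|) * exp (-u ^ 2 / 4) / √s := by field_simp

lemma hypHeatDensity_eq_mul_exp_succ (r : ℝ) {t : ℝ} (ht : 0 < t) :
    hypHeatDensity r t = (t + 1) * √(t + 1) / (t * √t) *
      exp (1 - r ^ 2 / (4 * t * (t + 1))) * hypHeatDensity r (t + 1) := by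
  have hexp : exp (-t - r ^ 2 / (4 * t)) =
      exp (1 - r ^ 2 / (4 * t * (t + 1))) * exp (-(t + 1) - r ^ 2 / (4 * (t + 1))) := by
    rw [← exp_add]
    congr 1
    field_simp
    ring
  have : 0 < √t := by positivity
  have : 0 < √(t + 1) := by positivity
  rw [hypHeatDensity_eq r ht, hypHeatDensity_eq r (by positivity), hexp]
  field_simp

lemma succ_mul_sqrt_succ_div_le {t : ℝ} (ht : 1 ≤ t) :
    (t + 1) * √(t + 1) / (t * √t) ≤ 1 + 3 / t := by
  rw [div_le_iff₀ (by positivity), show (1 + 3 / t) * (t * √t) = (t + 3) * √t by field_simp,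
    ← pow_le_pow_iff_left₀ (by positivity) (by positivity) two_ne_zero, mul_pow, mul_pow,
    sq_sqrt (by linarith), sq_sqrt (by linarith)]
  nlinarith

lemma abs_one_sub_sq_div_le {t s : ℝ} (r : ℝ) (ht : 1 ≤ t) (hts : t ≤ s) (hst : s ≤ t + 1) :
    |1 - r ^ 2 / (4 * t * (t + 1))| ≤ 2 * √s * (1 + |(r - 2 * s) / √s|) ^ 2 / t := by
  have hv : 1 ≤ √s := one_le_sqrt.2 (ht.trans hts)
  have hvv : √s * √s = s := mul_self_sqrt (by linarith)
  set u := (r - 2 * s) / √s with hu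
  have hr_eq : r = 2 * s + √s * u := by rw [hu]; field_simp; ring
  have hsq : r ^ 2 = 4 * s ^ 2 + 4 * (s * (√s * u)) + s * |u| ^ 2 := by
    rw [hr_eq, sq_abs]; linear_combination u ^ 2 * hvv
  have hcross : |s * (√s * u)| ≤ (t + 1) * √s * |u| := by
    rw [abs_mul, abs_mul, abs_of_nonneg (by linarith), abs_of_nonneg (by linarith), ← mul_assoc]
    gcongr
  have hquad : s * |u| ^ 2 ≤ (t + 1) * √s * |u| ^ 2 := by
    gcongr; nlinarith
  have hnum : |4 * t * (t + 1) - r ^ 2| ≤ 8 * (t + 1) * √s * (1 + |u|) ^ 2 := by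
    have := abs_le.1 hcross
    have : 0 ≤ (t + 1) * √s * |u| := by positivity
    rw [abs_le, hsq]
    constructor <;> nlinarith
  rw [show 1 - r ^ 2 / (4 * t * (t + 1)) = (4 * t * (t + 1) - r ^ 2) / (4 * t * (t + 1)) by
    field_simp, abs_div, abs_of_pos (show (0 : ℝ) < 4 * t * (t + 1) by positivity),
    div_le_iff₀ (by positivity)]
  calc |4 * t * (t + 1) - r ^ 2| ≤ 8 * (t + 1) * √s * (1 + |u|) ^ 2 := hnum
    _ = 2 * √s * (1 + |u|) ^ 2 / t * (4 * t * (t + 1)) := by field_simp; ring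

lemma abs_one_sub_mul_hypHeatDensity_le_gaussian {t s r : ℝ} (ht : 1 ≤ t) (hts : t ≤ s)
    (hst : s ≤ t + 1) (hr : 0 ≤ r) :
    |1 - r ^ 2 / (4 * t * (t + 1))| * hypHeatDensity r s ≤
      2 / t * gaussianWeight ((r - 2 * s) / √s) := by
  have hv : 0 < √s := sqrt_pos.2 (by linarith)
  calc |1 - r ^ 2 / (4 * t * (t + 1))| * hypHeatDensity r s
      ≤ 2 * √s * (1 + |(r - 2 * s) / √s|) ^ 2 / t *
        ((1 + |(r - 2 * s) / √s|) * exp (-((r - 2 * s) / √s) ^ 2 / 4) / √s) :=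
        mul_le_mul (abs_one_sub_sq_div_le r ht hts hst)
          (hypHeatDensity_le_gaussian hr (ht.trans hts)) (hypHeatDensity_nonneg hr (by linarith))
          (by positivity)
    _ = 2 / t * gaussianWeight ((r - 2 * s) / √s) := by
        rw [gaussianWeight]; field_simp

lemma abs_hypHeatDensity_succ_sub_le {t r : ℝ} (ht : 1 ≤ t) (hr : 0 ≤ r) :
    |hypHeatDensity r (t + 1) - hypHeatDensity r t| ≤
      (5 * gaussianWeight ((r - 2 * t) / √t) +
        2 * gaussianWeight ((r - 2 * (t + 1)) / √(t + 1))) / t := by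
  have ht0 : 0 < t := by linarith
  have hq : 1 ≤ (t + 1) * √(t + 1) / (t * √t) := by
    rw [one_le_div (by positivity)]
    gcongr <;> linarith
  have hq3 : (t + 1) * √(t + 1) / (t * √t) - 1 ≤ 3 / t := by
    linarith [succ_mul_sqrt_succ_div_le ht]
  have hD : hypHeatDensity r t ≤ gaussianWeight ((r - 2 * t) / √t) := by
    have hu : 1 ≤ 1 + |(r - 2 * t) / √t| := le_add_of_nonneg_right (abs_nonneg _)
    calc hypHeatDensity r t
        ≤ (1 + |(r - 2 * t) / √t|) * exp (-((r - 2 * t) / √t) ^ 2 / 4) / √t :=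
          hypHeatDensity_le_gaussian hr ht
      _ ≤ (1 + |(r - 2 * t) / √t|) * exp (-((r - 2 * t) / √t) ^ 2 / 4) :=
          div_le_self (by positivity) (one_le_sqrt.2 ht)
      _ ≤ gaussianWeight ((r - 2 * t) / √t) := by
          rw [gaussianWeight]
          gcongr
          exact le_self_pow₀ hu (by norm_num)
  calc |hypHeatDensity r (t + 1) - hypHeatDensity r t|
      ≤ ((t + 1) * √(t + 1) / (t * √t) - 1) * hypHeatDensity r t +
        (|1 - r ^ 2 / (4 * t * (t + 1))| * hypHeatDensity r t +
          |1 - r ^ 2 / (4 * t * (t + 1))| * hypHeatDensity r (t + 1)) := by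
        rw [← mul_add]
        exact abs_sub_le_of_eq_mul_exp (hypHeatDensity_nonneg hr (by linarith)) hq
          (hypHeatDensity_eq_mul_exp_succ r ht0)
    _ ≤ 3 / t * gaussianWeight ((r - 2 * t) / √t) +
        (2 / t * gaussianWeight ((r - 2 * t) / √t) +
          2 / t * gaussianWeight ((r - 2 * (t + 1)) / √(t + 1))) :=
        add_le_add (mul_le_mul hq3 hD (hypHeatDensity_nonneg hr ht0) (by positivity))
          (add_le_add (abs_one_sub_mul_hypHeatDensity_le_gaussian ht le_rfl (by linarith) hr)
            (abs_one_sub_mul_hypHeatDensity_le_gaussian ht (by linarith) le_rfl hr))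
    _ = _ := by ring

lemma integral_abs_hypHeatDensity_succ_sub_le {t : ℝ} (ht : 1 ≤ t) :
    ∫ r in Set.Ioi 0, |hypHeatDensity r (t + 1) - hypHeatDensity r t| ≤
      9 * (∫ u, gaussianWeight u) / √t := by
  have ht0 : 0 < t := by linarith
  have hv : 0 < √t := sqrt_pos.2 ht0
  have hv' : 0 < √(t + 1) := sqrt_pos.2 (by linarith)
  set M := ∫ u, gaussianWeight u
  have hM : 0 ≤ M := integral_nonneg gaussianWeight_nonneg
  have hw₀ := integrable_gaussianWeight.comp_sub_div (2 * t) hv.ne'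
  have hw₁ := integrable_gaussianWeight.comp_sub_div (2 * (t + 1)) hv'.ne'
  set g := fun r => (5 * gaussianWeight ((r - 2 * t) / √t) +
    2 * gaussianWeight ((r - 2 * (t + 1)) / √(t + 1))) / t
  have hg : Integrable g := ((hw₀.const_mul 5).add (hw₁.const_mul 2)).div_const t
  have hsqrt : √(t + 1) ≤ 2 * √t := by
    rw [sqrt_le_left (by positivity), mul_pow, sq_sqrt ht0.le]; linarith
  calc ∫ r in Set.Ioi 0, |hypHeatDensity r (t + 1) - hypHeatDensity r t|
      ≤ ∫ r in Set.Ioi 0, g r :=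
        integral_mono_of_nonneg (.of_forall fun _ => abs_nonneg _) hg.integrableOn
          ((ae_restrict_iff' measurableSet_Ioi).2 (.of_forall fun r hr =>
            abs_hypHeatDensity_succ_sub_le ht hr.le))
    _ ≤ ∫ r, g r := setIntegral_le_integral hg (.of_forall fun r => by
        have := gaussianWeight_nonneg ((r - 2 * t) / √t)
        have := gaussianWeight_nonneg ((r - 2 * (t + 1)) / √(t + 1))
        positivity)
    _ = (5 * √t + 2 * √(t + 1)) * M / t := by
        rw [integral_div, integral_add (hw₀.const_mul 5) (hw₁.const_mul 2), integral_const_mul,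
          integral_const_mul, integral_comp_sub_div, integral_comp_sub_div, abs_of_pos hv,
          abs_of_pos hv', smul_eq_mul, smul_eq_mul]
        ring
    _ ≤ (5 * √t + 2 * (2 * √t)) * M / t := by gcongr
    _ = 9 * M / √t := by
        rw [div_eq_div_iff ht0.ne' hv.ne']
        linear_combination 9 * M * mul_self_sqrt ht0.le

/-- The fundamental solution on `ℍ³` and its unit time delay converge to each other in
`L¹(ℍ³)`: `∫₀^∞ 4π (sinh r)² |G(r,t+1) - G(r,t)| dr → 0` as `t → ∞`. -/
theorem hypHeatKernel_time_delay_L1_convergence :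
    Tendsto (fun t : ℝ =>
        ∫ r in Set.Ioi (0 : ℝ),
          4 * π * (Real.sinh r) ^ 2 * |hypHeatKernel r (t + 1) - hypHeatKernel r t|)
      atTop (nhds 0) := by
  have hdensity (t r : ℝ) : 4 * π * sinh r ^ 2 * |hypHeatKernel r (t + 1) - hypHeatKernel r t| =
      |hypHeatDensity r (t + 1) - hypHeatDensity r t| := by
    rw [hypHeatDensity, hypHeatDensity, ← mul_sub, abs_mul,
      abs_of_nonneg (show 0 ≤ 4 * π * sinh r ^ 2 by positivity)]
  simp_rw [hdensity]
  refine squeeze_zero' (g := fun t => 9 * (∫ u, gaussianWeight u) / √t)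
    (.of_forall fun t => integral_nonneg fun r => abs_nonneg _) ?_
    (tendsto_const_nhds.div_atTop tendsto_sqrt_atTop)
  filter_upwards [eventually_ge_atTop 1] with t ht
  exact integral_abs_hypHeatDensity_succ_sub_le ht
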